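/- arXiv:2511.19027 — 5 statements merged into one kernel-verified Lean document; each statement's English description precedes it below -/
import Mathlib

section
/- Let r > 1 and (G,≤) an ordered graph. Every (r,≤)-chain uLv of length t decomposes uniquely as a concatenation v₀L₁'v₁ v₁L₂'v₂ ⋯ v_{t'−1}L_{t'}'v_{t'} with v₀ = u, v_{t'} = v, where each piece v_{i−1}L_i'v_i is an (r,≤)-admissible path. -/
/-!
An admissible segment starting at position `i` must end at the first later vertex smaller than
`w_i`: any later endpoint would have that vertex as an internal vertex below the start. Conversely
this first smaller vertex does end an admissible segment, since a path never returns to `w_i`, and it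
exists because the chain condition makes the last vertex `v` smaller than every earlier one. So each
cut position below the length determines the next one, and the decomposition is the forced sequence
of cuts starting at `0`.
-/

open SimpleGraph

variable {V : Type*}

/-- The segment of the walk `w` between positions `i < j` is an admissible path:
its final vertex is smaller than its first and all internal vertices exceed the first. -/
def AdmSeg [LinearOrder V] (G : SimpleGraph V) {u v : V} (w : G.Walk u v) (i j : ℕ) : Prop :=
  i < j ∧ j ≤ w.length ∧ w.getVert j < w.getVert i ∧
    ∀ k, i < k → k < j → w.getVert i < w.getVert k

theorem List.existsUnique_isChain_of_existsUnique_step {R : ℕ → ℕ → Prop} {n : ℕ}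
    (hR : ∀ i j, R i j → i < j ∧ j ≤ n) (hstep : ∀ i < n, ∃! j, R i j) (a : ℕ) (ha : a ≤ n) :
    ∃! L : List ℕ, L.head? = some a ∧ L.getLast? = some n ∧ L.IsChain R := by
  rcases ha.lt_or_eq with ha | rfl
  · obtain ⟨j, hj, hj_unique⟩ := hstep a ha
    obtain ⟨-, hjn⟩ := hR a j hj
    obtain ⟨L, ⟨hhead, hlast, hchain⟩, hL_unique⟩ :=
      existsUnique_isChain_of_existsUnique_step hR hstep j hjn
    have hL : L ≠ [] := by rintro rfl; simp at hhead
    refine ⟨a :: L, ⟨rfl, by rwa [List.getLast?_cons_of_ne_nil hL], ?_⟩, ?_⟩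
    · exact List.isChain_cons.2 ⟨by simpa [hhead] using hj, hchain⟩
    · rintro (_ | ⟨b, (_ | ⟨c, t⟩)⟩) ⟨hhead', hlast', hchain'⟩
      · simp at hhead'
      · simp_all
      · obtain rfl : b = a := by simpa using hhead'
        obtain ⟨hbc, hct⟩ := List.isChain_cons_cons.1 hchain'
        obtain rfl := hj_unique c hbc
        rw [hL_unique (c :: t) ⟨rfl, by simpa using hlast', hct⟩]
  · refine ⟨[a], ⟨rfl, rfl, List.isChain_singleton a⟩, ?_⟩
    rintro (_ | ⟨b, (_ | ⟨c, t⟩)⟩) ⟨hhead', -, hchain'⟩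
    · simp at hhead'
    · simpa using hhead'
    · obtain rfl : b = a := by simpa using hhead'
      have := hR b c (List.isChain_cons_cons.1 hchain').1
      omega
termination_by n - a
decreasing_by exact Nat.sub_lt_sub_left ha (hR a j hj).1

namespace AdmSeg

variable [LinearOrder V] {G : SimpleGraph V} {u v : V} {w : G.Walk u v} {i j j' : ℕ}

theorem right_unique (h : AdmSeg G w i j) (h' : AdmSeg G w i j') : j = j' := by
  by_contra hne
  rcases Nat.lt_or_gt_of_ne hne with hlt | hlt
  · exact (h'.2.2.2 j h.1 hlt).asymm h.2.2.1
  · exact (h.2.2.2 j' h'.1 hlt).asymm h'.2.2.1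

theorem exists_of_isPath (hw : w.IsPath) {j₀ : ℕ} (hij₀ : i < j₀) (hj₀ : j₀ ≤ w.length)
    (hlt : w.getVert j₀ < w.getVert i) : ∃ j, AdmSeg G w i j := by
  classical
  have hex : ∃ j, i < j ∧ j ≤ w.length ∧ w.getVert j < w.getVert i := ⟨j₀, hij₀, hj₀, hlt⟩
  obtain ⟨hij, hjn, hj⟩ := Nat.find_spec hex
  refine ⟨Nat.find hex, hij, hjn, hj, fun k hik hkj => ?_⟩
  have hk_ge : w.getVert i ≤ w.getVert k :=
    not_lt.1 fun hk => Nat.find_min hex hkj ⟨hik, by omega, hk⟩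
  refine hk_ge.lt_of_ne fun heq => hik.ne ?_
  exact hw.getVert_injOn (show i ≤ w.length by omega) (show k ≤ w.length by omega) heq

end AdmSeg

theorem stmt3_general [LinearOrder V] (G : SimpleGraph V) (r : ℕ) {u v : V}
    (w : G.Walk u v) (hpath : w.IsPath)
    (hchain : ∀ k, k < w.length → v < w.getVert k)
    (hrchain : ∀ i j, AdmSeg G w i j → j - i ≤ r) :
    ∃! L : List ℕ, L.head? = some 0 ∧ L.getLast? = some w.length ∧
      L.Chain' (fun i j => AdmSeg G w i j ∧ j - i ≤ r) := by
  refine List.existsUnique_isChain_of_existsUnique_step (fun i j h => ⟨h.1.1, h.1.2.1⟩)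
    (fun i hi => ?_) 0 w.length.zero_le
  obtain ⟨j, hj⟩ := AdmSeg.exists_of_isPath hpath hi le_rfl (by simpa using hchain i hi)
  exact ⟨j, ⟨hj, hrchain i j hj⟩, fun j' hj' => hj'.1.right_unique hj⟩

/-- Every `(r,≤)`-chain decomposes uniquely as a concatenation of `(r,≤)`-admissible paths:
there is a unique list of cut positions `0 = k₀ < k₁ < ⋯ < k_{t'} = length w` such that
each consecutive segment is an admissible path of length at most `r`. -/
theorem stmt3 [LinearOrder V] (G : SimpleGraph V) (r : ℕ) (hr : 1 < r) {u v : V}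
    (w : G.Walk u v) (hpath : w.IsPath)
    (hchain : ∀ k, k < w.length → v < w.getVert k)
    (hrchain : ∀ i j, AdmSeg G w i j → j - i ≤ r) :
    ∃! L : List ℕ, L.head? = some 0 ∧ L.getLast? = some w.length ∧
      L.Chain' (fun i j => AdmSeg G w i j ∧ j - i ≤ r) :=
  stmt3_general G r w hpath hchain hrchain
end

section
/- Let 𝕁 be an H-subgraph of an ordered graph 𝔾, let U ⊆ V(𝕁), and let Spine_𝕁(U) = {(G_i, U_i)}_{i=1}^s be the family of all useful pairs with G_i an induced ordered subgraph of 𝕁 and V(G_i) ∩ U = U_i. Then for any two distinct members i ≠ j: no edge of 𝕁 has one endpoint in V(G_i)∖U_i and the other in V(G_j)∖U_j, and moreover (V(G_i)∖U_i) ∩ (V(G_j)∖U_j) = ∅. -/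
open SimpleGraph

variable {V W : Type*}

/-- `J` is an `H`-subgraph of `G`: a subgraph of `G` isomorphic to `H`. -/
def IsHSub (G : SimpleGraph V) (H : SimpleGraph W) (J : G.Subgraph) : Prop :=
  ∃ f : W → V, Function.Injective f ∧ Set.range f = J.verts ∧
    ∀ a b : W, H.Adj a b ↔ J.Adj (f a) (f b)

/-- `D` is a prefix of the induced ordered subgraph of `J` on the vertex set `A`. -/
def IsPrefixOf [LinearOrder V] {G : SimpleGraph V} (J : G.Subgraph) (A D : Set V) : Prop :=
  D.Nonempty ∧ D ⊆ A ∧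
    (∀ u ∈ D, ∃ v ∈ A \ D, J.Adj u v) ∧
    (∀ u ∈ D, ∀ v ∈ A \ D, u < v) ∧
    (∀ v ∈ A, (∃ x ∈ J.verts \ A, J.Adj v x) → v ∈ D)

/-- `(A, D)` is a useful pair in the `H`-subgraph `J`: `A` induces an ordered subgraph
of `J`, `D` is a prefix of it, and `J[A ∖ D]` is connected. -/
def IsUsefulPair [LinearOrder V] {G : SimpleGraph V} (J : G.Subgraph) (A D : Set V) : Prop :=
  A ⊆ J.verts ∧ IsPrefixOf J A D ∧ (J.induce (A \ D)).Connected

/-- The spine of `U` in `J`: all useful pairs `(A, D)` with `A ∩ U = D`. -/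
def Spine [LinearOrder V] {G : SimpleGraph V} (J : G.Subgraph) (U : Set V) :
    Set (Set V × Set V) :=
  {P | IsUsefulPair J P.1 P.2 ∧ P.1 ∩ U = P.2}

/-- `U` is `J`-stable: every vertex of `J` outside `U` lies in `A ∖ D` for some
member `(A, D)` of the spine of `U`. -/
def IsStable [LinearOrder V] {G : SimpleGraph V} (J : G.Subgraph) (U : Set V) : Prop :=
  ∀ w ∈ J.verts \ U, ∃ P ∈ Spine J U, w ∈ P.1 \ P.2

/-- If `x` lies in the tail of a spine member `P` and is `J`-adjacent to a vertex `y`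
outside `U`, then `y` also lies in the tail of `P`. -/
lemma tail_closed [LinearOrder V] {G : SimpleGraph V} {J : G.Subgraph} {U : Set V}
    {P : Set V × Set V} (hP : P ∈ Spine J U)
    {x y : V} (hx : x ∈ P.1 \ P.2) (hyU : y ∉ U) (hadj : J.Adj x y) :
    y ∈ P.1 \ P.2 := by
  obtain ⟨⟨hPA, hpre, hconn⟩, hPU⟩ := hP
  have hyJ : y ∈ J.verts := J.edge_vert hadj.symm
  have hyA : y ∈ P.1 := by
    by_contra hyA
    exact hx.2 (hpre.2.2.2.2 x hx.1 ⟨y, ⟨hyJ, hyA⟩, hadj⟩)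
  refine ⟨hyA, fun hyD => hyU ?_⟩
  rw [← hPU] at hyD
  exact hyD.2

lemma spine_eq_aux [LinearOrder V] {G : SimpleGraph V} {J : G.Subgraph} {U : Set V}
    {P Q : Set V × Set V} (hP : P ∈ Spine J U) (hQ : Q ∈ Spine J U)
    {w : V} (hwP : w ∈ P.1 \ P.2) (hwQ : w ∈ Q.1 \ Q.2) :
    Q.1 \ Q.2 ⊆ P.1 \ P.2 := by
  intro b hb
  have hconn : (J.induce (Q.1 \ Q.2)).Connected := hQ.1.2.2
  have hreach := hconn.preconnected ⟨w, hwQ⟩ ⟨b, hb⟩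
  obtain ⟨p⟩ := hreach
  -- induct on the walk
  have key : ∀ {u v : (J.induce (Q.1 \ Q.2)).verts}
      (_ : (J.induce (Q.1 \ Q.2)).coe.Walk u v), (u : V) ∈ P.1 \ P.2 → (v : V) ∈ P.1 \ P.2 := by
    intro u v p
    induction p with
    | nil => exact id
    | cons h p ih =>
      intro hu
      apply ih
      rw [Subgraph.coe_adj, Subgraph.induce_adj] at h
      have hyU : ∀ {z : V}, z ∈ Q.1 \ Q.2 → z ∉ U := by
        intro z hz hU'
        exact hz.2 (by rw [← hQ.2]; exact ⟨hz.1, hU'⟩)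
      exact tail_closed hP hu (hyU h.2.1) h.2.2
  exact key p hwP

lemma spine_eq_of_mem [LinearOrder V] {G : SimpleGraph V} {J : G.Subgraph} {U : Set V}
    {P Q : Set V × Set V} (hP : P ∈ Spine J U) (hQ : Q ∈ Spine J U)
    {w : V} (hwP : w ∈ P.1 \ P.2) (hwQ : w ∈ Q.1 \ Q.2) : P = Q := by
  have hS : P.1 \ P.2 = Q.1 \ Q.2 :=
    Set.Subset.antisymm (spine_eq_aux hQ hP hwQ hwP) (spine_eq_aux hP hQ hwP hwQ)
  -- D = E
  have hD : ∀ {R S : Set V × Set V}, R ∈ Spine J U → S ∈ Spine J U →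
      R.1 \ R.2 = S.1 \ S.2 → R.2 ⊆ S.2 := by
    intro R S hR hS' hRS u hu
    have huU : u ∈ U := by have := hu; rw [← hR.2] at this; exact this.2
    obtain ⟨v, hv, hadj⟩ := hR.1.2.1.2.2.1 u hu
    have hvS : v ∈ S.1 \ S.2 := by rw [← hRS]; exact hv
    have huJ : u ∈ J.verts := hR.1.1 (hR.1.2.1.2.1 hu)
    have huS1 : u ∈ S.1 := by
      by_contra huS1
      exact hvS.2 (hS'.1.2.1.2.2.2.2 v hvS.1 ⟨u, ⟨huJ, huS1⟩, hadj.symm⟩)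
    rw [← hS'.2]; exact ⟨huS1, huU⟩
  have hD2 : P.2 = Q.2 := Set.Subset.antisymm (hD hP hQ hS) (hD hQ hP hS.symm)
  have hA : P.1 = Q.1 := by
    have h1 : P.1 = (P.1 \ P.2) ∪ P.2 := (Set.diff_union_of_subset hP.1.2.1.2.1).symm
    have h2 : Q.1 = (Q.1 \ Q.2) ∪ Q.2 := (Set.diff_union_of_subset hQ.1.2.1.2.1).symm
    rw [h1, h2, hS, hD2]
  exact Prod.ext hA hD2

/-- Distinct members of the spine: no edge of `J` joins `A_i ∖ D_i` to `A_j ∖ D_j`,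
and these sets are disjoint. -/
theorem stmt7 [Fintype V] [LinearOrder V] (G : SimpleGraph V) (H : SimpleGraph W)
    (hH : H.Connected) (J : G.Subgraph) (hJ : IsHSub G H J) (U : Set V) (hU : U ⊆ J.verts)
    (P Q : Set V × Set V) (hP : P ∈ Spine J U) (hQ : Q ∈ Spine J U) (hne : P ≠ Q) :
    (∀ a ∈ P.1 \ P.2, ∀ b ∈ Q.1 \ Q.2, ¬ J.Adj a b) ∧
      (P.1 \ P.2) ∩ (Q.1 \ Q.2) = ∅ := by
  constructor
  · intro a ha b hb hadj
    have hbU : b ∉ U := fun hbU => hb.2 (by rw [← hQ.2]; exact ⟨hb.1, hbU⟩)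
    have hb' : b ∈ P.1 \ P.2 := tail_closed hP ha hbU hadj
    exact hne (spine_eq_of_mem hP hQ hb' hb)
  · rw [Set.eq_empty_iff_forall_notMem]
    rintro x ⟨hx1, hx2⟩
    exact hne (spine_eq_of_mem hP hQ hx1 hx2)
end

section
/- Let 𝕁 be an H-subgraph (H connected) of an ordered graph and U ⊆ V(𝕁) a 𝕁-stable set. Then Spine_𝕁(U) = ∅ if and only if U = V(𝕁). -/
open SimpleGraph

variable {V W : Type*}

/-- For a `J`-stable set `U`, the spine of `U` is empty iff `U = V(J)`. -/
theorem stmt8 [Fintype V] [LinearOrder V] (G : SimpleGraph V) (H : SimpleGraph W)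
    (hH : H.Connected) (J : G.Subgraph) (hJ : IsHSub G H J) (U : Set V)
    (hU : U ⊆ J.verts) (hstable : IsStable J U) :
    Spine J U = ∅ ↔ U = J.verts := by
  constructor
  · intro hemp
    apply Set.Subset.antisymm hU
    intro w hw
    by_contra hwU
    obtain ⟨P, hP, _⟩ := hstable w ⟨hw, hwU⟩
    rw [hemp] at hP
    exact hP
  · intro hUV
    ext P
    simp only [Set.mem_empty_iff_false, iff_false]
    rintro ⟨⟨hAV, ⟨⟨d, hd⟩, hDA, hex, -, -⟩, -⟩, hint⟩
    obtain ⟨v, ⟨hvA, hvD⟩, -⟩ := hex d hd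
    exact hvD (hint ▸ ⟨hvA, hUV ▸ hAV hvA⟩)
end

section
/- Let 𝕁 be an H-subgraph (H connected) of an ordered graph, let U ⊊ V(𝕁) be a 𝕁-stable set, and let (G_i, U_i) be any member of Spine_𝕁(U) with nadir v = Nadir(G_i, U_i). Then U ∪ {v} is 𝕁-stable. -/
open SimpleGraph

variable {V W : Type*}

/-!
Let `w ∉ U ∪ {v}` and take a spine member `(A, D)` of `U` with `w ∈ A \ D`. If `v ∉ A`, the
same pair lies in the spine of `U ∪ {v}`. Otherwise `v ∈ A \ D`; as `J[A \ D]` is connected and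
avoids `U`, the boundary condition of the prefix `P.2` traps it inside `P.1 \ P.2`, so `v` is the
least vertex of `A \ D` and `D ∪ {v}` still lies below the rest of `A`. The component `C` of `w`
in `J[A \ (D ∪ {v})]`, together with the vertices of `D ∪ {v}` adjacent to `C` (among them `v`,
again by connectivity of `J[A \ D]`), is then a useful pair in the spine of `U ∪ {v}`.
-/

namespace SimpleGraph.Subgraph

variable {G : SimpleGraph V} {J : G.Subgraph}

theorem subset_of_connected_induce {S T : Set V} (hS : (J.induce S).Connected) {x : V}
    (hxS : x ∈ S) (hxT : x ∈ T) (hT : ∀ a ∈ S ∩ T, ∀ b ∈ S, J.Adj a b → b ∈ T) : S ⊆ T := by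
  intro y hyS
  obtain ⟨p⟩ := hS ⟨x, hxS⟩ ⟨y, hyS⟩
  suffices ∀ a b, (J.induce S).coe.Walk a b → a.1 ∈ T → b.1 ∈ T from this _ _ p hxT
  intro a b q
  induction q with
  | nil => exact id
  | cons h _ ih => exact fun ha => ih (hT _ ⟨h.1, ha⟩ _ h.2.1 h.2.2)

variable (J) in
def componentIn (S : Set V) (w : V) : Set V :=
  ((J.induce S).spanningCoe.connectedComponentMk w).supp

variable {S : Set V} {w : V}

theorem mem_componentIn_self : w ∈ J.componentIn S w := rfl

theorem componentIn_subset (hw : w ∈ S) : J.componentIn S w ⊆ S := by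
  intro x hx
  obtain ⟨p⟩ := ConnectedComponent.exact hx
  cases p with
  | nil => exact hw
  | cons h _ => exact h.1

theorem mem_componentIn_of_adj {a b : V} (ha : a ∈ J.componentIn S w) (haS : a ∈ S)
    (hb : b ∈ S) (hab : J.Adj a b) : b ∈ J.componentIn S w :=
  ConnectedComponent.mem_supp_of_adj_mem_supp _ ha ⟨haS, hb, hab⟩

theorem connected_induce_componentIn : (J.induce (J.componentIn S w)).Connected := by
  let c := (J.induce S).spanningCoe.connectedComponentMk w
  let f : c.toSimpleGraph →g (J.induce c.supp).coe :=
    ⟨fun x => ⟨x.1, x.2⟩, fun {a b} h => ⟨a.2, b.2, h.2.2⟩⟩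
  exact ⟨c.connected_toSimpleGraph.map f fun x => ⟨⟨x.1, x.2⟩, rfl⟩⟩

theorem exists_adj_componentIn_diff_singleton (hS : (J.induce S).Connected) {v : V}
    (hv : v ∈ S) (hw : w ∈ S) (hwv : w ≠ v) :
    ∃ c ∈ J.componentIn (S \ {v}) w, J.Adj v c := by
  by_contra! hno
  have hwS' : w ∈ S \ {v} := ⟨hw, hwv⟩
  have hclosed : S ⊆ J.componentIn (S \ {v}) w := by
    refine subset_of_connected_induce hS hw mem_componentIn_self ?_
    rintro a ⟨haS, haC⟩ b hbS hab
    have hbv : b ≠ v := by rintro rfl; exact hno a haC hab.symm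
    have hbS' : b ∈ S \ {v} := ⟨hbS, hbv⟩
    exact mem_componentIn_of_adj haC (componentIn_subset hwS' haC) hbS' hab
  exact (componentIn_subset hwS' (hclosed hv)).2 rfl

variable {A D U : Set V}

variable (J) in
def componentPrefix (A D : Set V) (w : V) : Set V :=
  {u ∈ D | ∃ c ∈ J.componentIn (A \ D) w, J.Adj u c}

theorem componentIn_union_componentPrefix_diff (hw : w ∈ A \ D) :
    (J.componentIn (A \ D) w ∪ J.componentPrefix A D w) \ J.componentPrefix A D w =
      J.componentIn (A \ D) w := by
  rw [Set.union_sdiff_right, sdiff_eq_left]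
  exact Set.disjoint_left.mpr fun x hx hxD => (componentIn_subset hw hx).2 hxD.1

theorem componentIn_union_componentPrefix_inter (hw : w ∈ A \ D) (hDU : D ⊆ U)
    (hAU : Disjoint (A \ D) U) :
    (J.componentIn (A \ D) w ∪ J.componentPrefix A D w) ∩ U = J.componentPrefix A D w := by
  rw [Set.union_inter_distrib_right,
    Set.disjoint_iff_inter_eq_empty.mp (hAU.mono_left (componentIn_subset hw)), Set.empty_union]
  exact Set.inter_eq_left.mpr fun u hu => hDU hu.1

end SimpleGraph.Subgraph

section UsefulPair

open SimpleGraph.Subgraph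

variable [LinearOrder V] {G : SimpleGraph V} {J : G.Subgraph} {A D U : Set V}

theorem IsPrefixOf.mem_of_adj_notMem (hD : IsPrefixOf J A D) {x y : V} (hx : x ∈ A)
    (hxy : J.Adj x y) (hy : y ∉ A) : x ∈ D :=
  hD.2.2.2.2 x hx ⟨y, ⟨J.edge_vert hxy.symm, hy⟩, hxy⟩

theorem IsPrefixOf.subset_diff_of_connected (hD : IsPrefixOf J A D) {S : Set V}
    (hS : (J.induce S).Connected) (hSD : Disjoint S D) {x : V} (hxS : x ∈ S) (hx : x ∈ A \ D) :
    S ⊆ A \ D :=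
  subset_of_connected_induce hS hxS hx fun _ ⟨_, haA, haD⟩ _ hbS hab =>
    ⟨by_contra fun hbA => haD (hD.mem_of_adj_notMem haA hab hbA), hSD.notMem_of_mem_left hbS⟩

variable {w : V}

theorem isUsefulPair_componentIn (hA : A ⊆ J.verts) (hlt : ∀ u ∈ D, ∀ x ∈ A \ D, u < x)
    (hbd : ∀ x ∈ A, ∀ y, J.Adj x y → y ∉ A → x ∈ D) (hw : w ∈ A \ D)
    (hne : (J.componentPrefix A D w).Nonempty) :
    IsUsefulPair J (J.componentIn (A \ D) w ∪ J.componentPrefix A D w)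
      (J.componentPrefix A D w) := by
  have hCA : J.componentIn (A \ D) w ⊆ A \ D := componentIn_subset hw
  have hdiff := componentIn_union_componentPrefix_diff (J := J) hw
  refine ⟨Set.union_subset (hCA.trans Set.sdiff_subset |>.trans hA) ?_,
    ⟨hne, Set.subset_union_right, ?_, ?_, ?_⟩, by rw [hdiff]; exact connected_induce_componentIn⟩
  · rintro u ⟨-, c, -, huc⟩
    exact J.edge_vert huc
  · rintro u ⟨-, c, hc, huc⟩
    exact ⟨c, by rwa [hdiff], huc⟩
  · rintro u ⟨huD, -⟩ c hc
    rw [hdiff] at hc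
    exact hlt u huD c (hCA hc)
  · rintro x (hxC | hxD') ⟨y, ⟨-, hyA'⟩, hxy⟩
    · exfalso
      by_cases hyA : y ∈ A
      · by_cases hyD : y ∈ D
        · exact hyA' (Or.inr ⟨hyD, x, hxC, hxy.symm⟩)
        · exact hyA' (Or.inl (mem_componentIn_of_adj hxC (hCA hxC) ⟨hyA, hyD⟩ hxy))
      · exact (hCA hxC).2 (hbd x (hCA hxC).1 y hxy hyA)
    · exact hxD'

variable {P Q : Set V × Set V} {v : V}

theorem snd_subset_of_mem_spine (hP : P ∈ Spine J U) : P.2 ⊆ U :=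
  hP.2 ▸ Set.inter_subset_right

theorem disjoint_diff_of_mem_spine (hP : P ∈ Spine J U) : Disjoint (P.1 \ P.2) U :=
  Set.disjoint_left.mpr fun _ hx hxU => hx.2 (hP.2 ▸ ⟨hx.1, hxU⟩)

theorem mem_spine_union_singleton (hP : P ∈ Spine J U) (hv : v ∉ P.1) :
    P ∈ Spine J (U ∪ {v}) := by
  refine ⟨hP.1, ?_⟩
  rw [Set.inter_union_distrib_left, hP.2, Set.inter_singleton_eq_empty.mpr hv, Set.union_empty]

theorem diff_subset_of_mem_spine (hP : P ∈ Spine J U) (hQ : Q ∈ Spine J U) (hv : v ∈ P.1 \ P.2)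
    (hvQ : v ∈ Q.1 \ Q.2) : Q.1 \ Q.2 ⊆ P.1 \ P.2 :=
  hP.1.2.1.subset_diff_of_connected hQ.1.2.2
    ((disjoint_diff_of_mem_spine hQ).mono_right (snd_subset_of_mem_spine hP)) hvQ hv

theorem exists_mem_spine_union_nadir (hP : P ∈ Spine J U) (hv : v ∈ P.1 \ P.2)
    (hmin : ∀ u ∈ P.1 \ P.2, v ≤ u) (hQ : Q ∈ Spine J U) (hw : w ∈ Q.1 \ Q.2) (hwv : w ≠ v) :
    ∃ R ∈ Spine J (U ∪ {v}), w ∈ R.1 \ R.2 := by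
  by_cases hvQ : v ∉ Q.1
  · exact ⟨Q, mem_spine_union_singleton hQ hvQ, hw⟩
  rw [not_not] at hvQ
  have hvU : v ∉ U := (disjoint_diff_of_mem_spine hP).notMem_of_mem_left hv
  have hvQ' : v ∈ Q.1 \ Q.2 := ⟨hvQ, fun h => hvU (snd_subset_of_mem_spine hQ h)⟩
  have hQP := diff_subset_of_mem_spine hP hQ hv hvQ'
  obtain ⟨hQJ, hQpre, hQconn⟩ := hQ.1
  have hwD : w ∈ Q.1 \ (Q.2 ∪ {v}) := ⟨hw.1, fun h => h.elim hw.2 hwv⟩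
  have hdisj : Disjoint (Q.1 \ (Q.2 ∪ {v})) (U ∪ {v}) :=
    Set.disjoint_union_right.mpr
      ⟨(disjoint_diff_of_mem_spine hQ).mono_left
          (Set.sdiff_subset_sdiff_right Set.subset_union_left),
        Set.disjoint_singleton_right.mpr fun h => h.2 (Or.inr rfl)⟩
  obtain ⟨c, hc, hvc⟩ := exists_adj_componentIn_diff_singleton hQconn hvQ' hw hwv
  rw [Set.sdiff_sdiff] at hc
  refine ⟨(J.componentIn (Q.1 \ (Q.2 ∪ {v})) w ∪ J.componentPrefix Q.1 (Q.2 ∪ {v}) w,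
    J.componentPrefix Q.1 (Q.2 ∪ {v}) w),
    ⟨isUsefulPair_componentIn hQJ ?_ ?_ hwD ⟨v, Or.inr rfl, c, hc, hvc⟩,
      componentIn_union_componentPrefix_inter hwD
        (Set.union_subset_union_left _ (snd_subset_of_mem_spine hQ)) hdisj⟩, ?_⟩
  · rintro u (hu | rfl) x ⟨hxQ, hxD⟩
    · exact hQpre.2.2.2.1 u hu x ⟨hxQ, fun h => hxD (Or.inl h)⟩
    · exact (hmin x (hQP ⟨hxQ, fun h => hxD (Or.inl h)⟩)).lt_of_ne fun h => hxD (Or.inr h.symm)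
  · exact fun x hx y hxy hy => Or.inl (hQpre.mem_of_adj_notMem hx hxy hy)
  · rw [componentIn_union_componentPrefix_diff hwD]
    exact mem_componentIn_self

end UsefulPair

theorem stmt10_general [LinearOrder V] (G : SimpleGraph V) (J : G.Subgraph) (U : Set V)
    (hstable : IsStable J U) (P : Set V × Set V) (hP : P ∈ Spine J U) (v : V)
    (hv : v ∈ P.1 \ P.2 ∧ ∀ u ∈ P.1 \ P.2, v ≤ u) :
    IsStable J (U ∪ {v}) := by
  rintro w ⟨hwJ, hwUv⟩
  obtain ⟨Q, hQ, hwQ⟩ := hstable w ⟨hwJ, fun h => hwUv (Or.inl h)⟩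
  exact exists_mem_spine_union_nadir hP hv.1 hv.2 hQ hwQ fun h => hwUv (Or.inr h)

/-- Adding the nadir of a spine member to a `J`-stable proper subset keeps it `J`-stable. -/
theorem stmt10 [Fintype V] [LinearOrder V] (G : SimpleGraph V) (H : SimpleGraph W)
    (hH : H.Connected) (J : G.Subgraph) (hJ : IsHSub G H J) (U : Set V)
    (hU : U ⊆ J.verts) (hUne : U ≠ J.verts) (hstable : IsStable J U)
    (P : Set V × Set V) (hP : P ∈ Spine J U) (v : V)
    (hv : v ∈ P.1 \ P.2 ∧ ∀ u ∈ P.1 \ P.2, v ≤ u) :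
    IsStable J (U ∪ {v}) :=
  stmt10_general G J U hstable P hP v hv
end

section
/- Let 𝔾 be an ordered graph with r-admissibility at most p ≥ 2, and fix a connected graph H with |V(H)| ≤ r. For every vertex v of 𝔾, any family of pairwise non-similar useful pairs (G*, U*) with v = max U* (maximum under the order) has size at most p^{3r²·log r}. More precisely, the number of choices for U* is at most C(p(p−1)^{r−1}, |V(H)|−1) ≤ p^{2r|V(H)|}, and the number of ordered isomorphism types of induced subgraphs of H is at most 2^{2|V(H)| log |V(H)|}. -/
/-!
Every vertex `u ≠ v` of the prefix `D` of a pair in the family is joined to `v` through the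
connected set `A ∖ D`, which lies above `v`; the resulting path has length `< r`, so `D ∖ {v}`
lies in the strong reach `Target^{r-1}(v)`. Admissibility bounds that reach: a maximal family of
admissible paths from `v` meets every other one above `v`, and cutting paths at their first
vertex below the start gives a recursion whose solution is `(p j)^{2j}`. Up to similarity a pair
is determined by its prefix, `|A|`, and the adjacency of `J` on `A` relabelled by ranks in `A`,
since the prefix is an initial segment of `A`. Counting these data gives the bound.
-/

open SimpleGraph

variable {V W : Type*}

/-- An `(r,𝔾)`-admissible path packing rooted at `v`. -/
def IsAdmPacking [LinearOrder V] (G : SimpleGraph V) (r : ℕ) (v : V) {t : ℕ}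
    (F : Fin t → Σ x : V, G.Walk v x) : Prop :=
  (∀ i, ((F i).2).IsPath ∧ (F i).2.length ≤ r ∧ (F i).1 < v ∧
      ∀ y ∈ (F i).2.support, y ≠ v → y ≠ (F i).1 → v < y) ∧
  ∀ i j, i ≠ j → ∀ y, y ∈ (F i).2.support → y ∈ (F j).2.support → y = v

/-- The `r`-admissibility of the ordered graph `(G, ≤)` is at most `p`. -/
def AdmAtMost [LinearOrder V] (G : SimpleGraph V) (p r : ℕ) : Prop :=
  ∀ (v : V) (t : ℕ) (F : Fin t → Σ x : V, G.Walk v x), IsAdmPacking G r v F → t ≤ p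

/-- A useful pair in the ordered graph `G`: an induced ordered subgraph (on vertex set `A`)
of some `H`-subgraph `J` of `G`, together with a prefix `D`. -/
structure UPair [LinearOrder V] (G : SimpleGraph V) (H : SimpleGraph W) where
  J : G.Subgraph
  A : Set V
  D : Set V
  isHSub : IsHSub G H J
  isUseful : IsUsefulPair J A D

/-- The edges of a useful pair. -/
def UPair.edges [LinearOrder V] {G : SimpleGraph V} {H : SimpleGraph W} (P : UPair G H) :
    Set (Sym2 V) :=
  {e | ∃ a ∈ P.A, ∃ b ∈ P.A, P.J.Adj a b ∧ e = s(a, b)}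

/-- Two useful pairs are similar: same prefix, and there is an order-isomorphism between
them mapping prefix to prefix. -/
def UPairSimilar [LinearOrder V] {G : SimpleGraph V} {H : SimpleGraph W}
    (P Q : UPair G H) : Prop :=
  P.D = Q.D ∧ ∃ f : V → V, Set.BijOn f P.A Q.A ∧ f '' P.D = Q.D ∧
    (∀ a ∈ P.A, ∀ b ∈ P.A, (P.J.Adj a b ↔ Q.J.Adj (f a) (f b))) ∧
    (∀ a ∈ P.A, ∀ b ∈ P.A, (a < b ↔ f a < f b))

/-- A strata: a family of pairwise similar useful pairs, all with prefix `U`, such that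
any two distinct members share only edges between vertices of `U`. -/
def IsStrata [LinearOrder V] {G : SimpleGraph V} {H : SimpleGraph W}
    (𝓜 : Set (UPair G H)) (U : Set V) : Prop :=
  (∀ P ∈ 𝓜, P.D = U) ∧
  (∀ P ∈ 𝓜, ∀ Q ∈ 𝓜, UPairSimilar P Q) ∧
  (∀ P ∈ 𝓜, ∀ Q ∈ 𝓜, P ≠ Q →
    ∀ e ∈ P.edges ∩ Q.edges, ∀ a ∈ e, a ∈ U)

/-- `v` is the nadir of the useful pair `P`: the minimum of `A ∖ D` in the order. -/
def IsNadir [LinearOrder V] {G : SimpleGraph V} {H : SimpleGraph W}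
    (P : UPair G H) (v : V) : Prop :=
  v ∈ P.A \ P.D ∧ ∀ u ∈ P.A \ P.D, v ≤ u

/-- The set of nadirs of a family of useful pairs. -/
def nadirs [LinearOrder V] {G : SimpleGraph V} {H : SimpleGraph W}
    (𝓜 : Set (UPair G H)) : Set V :=
  {v | ∃ P ∈ 𝓜, IsNadir P v}

open Finset

namespace SimpleGraph.Walk

variable {G : SimpleGraph V} [DecidableEq V] {u v w : V}

lemma start_notMem_support_dropUntil {p : G.Walk u v} (hp : p.IsPath) (hw : w ∈ p.support)
    (hu : u ≠ w) : u ∉ (p.dropUntil w hw).support := by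
  intro h
  have hnodup := hp.support_nodup
  rw [← p.take_spec hw, support_append] at hnodup
  rw [← cons_tail_support, List.mem_cons] at h
  exact h.elim hu (List.disjoint_of_nodup_append hnodup (p.takeUntil w hw).start_mem_support)

lemma IsPath.length_lt_card {p : G.Walk u v} (hp : p.IsPath) {s : Finset V}
    (hs : ∀ x ∈ p.support, x ∈ s) : p.length < #s := by
  have : p.support.toFinset ⊆ s := fun x hx => hs x (List.mem_toFinset.1 hx)
  have := card_le_card this
  rw [List.toFinset_card_of_nodup hp.support_nodup, length_support] at this
  omega

lemma card_inner_support_le (p : G.Walk u v) (huv : u ≠ v) :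
    #((p.support.toFinset.erase u).erase v) ≤ p.length - 1 := by
  have hv : v ∈ p.support.toFinset.erase u := mem_erase.2 ⟨huv.symm, by simp⟩
  rw [card_erase_of_mem hv, card_erase_of_mem (by simp)]
  have := List.toFinset_card_le p.support
  rw [length_support] at this
  omega

end SimpleGraph.Walk

section Packing

variable [LinearOrder V] (G : SimpleGraph V) (k : ℕ) (v : V)

def IsAdmPath (f : Σ x : V, G.Walk v x) : Prop :=
  f.2.IsPath ∧ f.2.length ≤ k ∧ f.1 < v ∧ ∀ y ∈ f.2.support, y ≠ v → y ≠ f.1 → v < y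

def IsAdmPathFamily (F : Finset (Σ x : V, G.Walk v x)) : Prop :=
  (∀ f ∈ F, IsAdmPath G k v f) ∧
    (F : Set (Σ x : V, G.Walk v x)).Pairwise fun f g => ∀ y ∈ f.2.support, y ∈ g.2.support → y = v

variable {G k v} {p r : ℕ}

lemma IsAdmPathFamily.card_le (hadm : AdmAtMost G p r) (hkr : k ≤ r)
    {F : Finset (Σ x : V, G.Walk v x)} (hF : IsAdmPathFamily G k v F) : #F ≤ p := by
  refine hadm v #F (fun i => F.equivFin.symm i) ⟨fun i => ?_, fun i j hij y hi hj => ?_⟩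
  · obtain ⟨hpath, hlen, hlt, hint⟩ := hF.1 _ (F.equivFin.symm i).2
    exact ⟨hpath, hlen.trans hkr, hlt, hint⟩
  · exact hF.2 (F.equivFin.symm i).2 (F.equivFin.symm j).2
      (fun h => hij (F.equivFin.symm.injective (Subtype.ext h))) y hi hj

lemma exists_maximal_admPathFamily (hadm : AdmAtMost G p r) (hkr : k ≤ r) :
    ∃ F, IsAdmPathFamily G k v F ∧ ∀ f, IsAdmPath G k v f → f ∉ F →
      ∃ g ∈ F, ∃ y ∈ f.2.support, y ∈ g.2.support ∧ y ≠ v := by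
  classical
  let P : ℕ → Prop := fun n => ∃ F, IsAdmPathFamily G k v F ∧ #F = n
  obtain ⟨F, hF, hcard⟩ : P (Nat.findGreatest P p) :=
    Nat.findGreatest_spec (Nat.zero_le p) ⟨∅, ⟨by simp, by simp⟩, rfl⟩
  refine ⟨F, hF, fun f hf hfF => ?_⟩
  by_contra! hdisj
  have hF' : IsAdmPathFamily G k v (insert f F) := by
    refine ⟨fun g hg => (mem_insert.1 hg).elim (· ▸ hf) (hF.1 g), ?_⟩
    rw [coe_insert, Set.pairwise_insert]
    exact ⟨hF.2, fun g hg _ => ⟨fun y hyf hyg => hdisj g hg y hyf hyg,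
      fun y hyg hyf => hdisj g hg y hyf hyg⟩⟩
  have := Nat.le_findGreatest (P := P) (hF'.card_le hadm hkr) ⟨_, hF', rfl⟩
  rw [card_insert_of_notMem hfF] at this
  omega

end Packing

section Reach

variable [Fintype V] [LinearOrder V]

open Classical in
/-- `reachBelow G v v k` is the paper's `Target^k(v)`; the free start vertex `x` is what makes
the recursion bounding it go through. -/
noncomputable def reachBelow (G : SimpleGraph V) (v x : V) (k : ℕ) : Finset V :=
  {u | u < v ∧ ∃ w : G.Walk x u, w.IsPath ∧ w.length ≤ k ∧
    ∀ y ∈ w.support, y ≠ x → y ≠ u → v < y}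

variable {G : SimpleGraph V} {v x u : V} {k l p r : ℕ}

lemma mem_reachBelow : u ∈ reachBelow G v x k ↔ u < v ∧ ∃ w : G.Walk x u, w.IsPath ∧
    w.length ≤ k ∧ ∀ y ∈ w.support, y ≠ x → y ≠ u → v < y := by
  simp only [reachBelow, mem_filter, mem_univ, true_and]

lemma reachBelow_mono (hkl : k ≤ l) : reachBelow G v x k ⊆ reachBelow G v x l := by
  intro u hu
  obtain ⟨huv, w, hw, hlen, hint⟩ := mem_reachBelow.1 hu
  exact mem_reachBelow.2 ⟨huv, w, hw, hlen.trans hkl, hint⟩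

lemma reachBelow_zero (hvx : v ≤ x) : reachBelow G v x 0 = ∅ := by
  refine eq_empty_of_forall_notMem fun u hu => ?_
  obtain ⟨huv, w, -, hlen, -⟩ := mem_reachBelow.1 hu
  exact (huv.trans_le hvx).ne' (Walk.eq_of_length_eq_zero (Nat.le_zero.1 hlen))

lemma mem_reachBelow_dropUntil {y : V} {w : G.Walk x u} (hw : w.IsPath) (hu : u < v)
    (hint : ∀ z ∈ w.support, z ≠ x → z ≠ u → v < z) (hy : y ∈ w.support) (hyx : y ≠ x) :
    u ∈ reachBelow G v y (w.dropUntil y hy).length := by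
  refine mem_reachBelow.2 ⟨hu, w.dropUntil y hy, hw.dropUntil hy, le_rfl, fun z hz hzy hzu => ?_⟩
  refine hint z (w.support_dropUntil_subset_support hy hz) ?_ hzu
  rintro rfl
  exact Walk.start_notMem_support_dropUntil hw hy hyx.symm hz

lemma card_reachBelow_self_le (hadm : AdmAtMost G p r) (hkr : k ≤ r) {M : ℕ}
    (hM : ∀ z, v < z → #(reachBelow G v z (k - 1)) ≤ M) :
    #(reachBelow G v v k) ≤ p + p * (k - 1) * M := by
  obtain ⟨F, hF, hmax⟩ := exists_maximal_admPathFamily (v := v) hadm hkr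
  let inner : (Σ x : V, G.Walk v x) → Finset V := fun f => (f.2.support.toFinset.erase v).erase f.1
  have hcover : reachBelow G v v k ⊆
      F.image Sigma.fst ∪ (F.biUnion inner).biUnion (reachBelow G v · (k - 1)) := by
    intro u hu
    obtain ⟨huv, w, hw, hlen, hint⟩ := mem_reachBelow.1 hu
    by_cases hend : u ∈ F.image Sigma.fst
    · exact mem_union_left _ hend
    obtain ⟨g, hg, y, hyw, hyg, hyv⟩ :=
      hmax ⟨u, w⟩ ⟨hw, hlen, huv, hint⟩ fun h => hend (mem_image_of_mem _ h)
    obtain ⟨-, -, hglt, hgint⟩ := hF.1 g hg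
    have hyu : y ≠ u := by
      rintro rfl
      by_cases hyg1 : y = g.1
      · exact hend (mem_image.2 ⟨g, hg, hyg1.symm⟩)
      · exact (hgint y hyg hyv hyg1).not_gt huv
    have hvy : v < y := hint y hyw hyv hyu
    refine mem_union_right _ (mem_biUnion.2 ⟨y, mem_biUnion.2 ⟨g, hg, ?_⟩, ?_⟩)
    · simp only [inner, mem_erase, List.mem_toFinset]
      exact ⟨(hglt.trans hvy).ne', hyv, hyg⟩
    · refine reachBelow_mono ?_ (mem_reachBelow_dropUntil hw huv hint hyw hyv)
      have := w.length_dropUntil_lt_length hyw hyv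
      omega
  have hinner : #(F.biUnion inner) ≤ p * (k - 1) := by
    refine (card_biUnion_le_card_mul _ _ _ fun f hf => ?_).trans
      (Nat.mul_le_mul_right _ (hF.card_le hadm hkr))
    obtain ⟨-, hlen, hlt, -⟩ := hF.1 f hf
    exact (f.2.card_inner_support_le hlt.ne').trans (by omega)
  calc #(reachBelow G v v k)
      ≤ #(F.image Sigma.fst) + #((F.biUnion inner).biUnion (reachBelow G v · (k - 1))) :=
        (card_le_card hcover).trans (card_union_le _ _)
    _ ≤ p + p * (k - 1) * M := by
        gcongr
        · exact card_image_le.trans (hF.card_le hadm hkr)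
        · refine (card_biUnion_le_card_mul _ _ _ fun y hy => hM y ?_).trans
            (Nat.mul_le_mul_right _ hinner)
          obtain ⟨f, hf, hyf⟩ := mem_biUnion.1 hy
          simp only [inner, mem_erase, List.mem_toFinset] at hyf
          exact (hF.1 f hf).2.2.2 y hyf.2.2 hyf.2.1 hyf.1

lemma mem_reachBelow_of_walk {w : G.Walk x u} (hu : u < v) {S : Finset V}
    (hS : ∀ y ∈ w.support, y ≠ x → y ≠ u → y ∈ S) (hSv : ∀ y ∈ S, v < y) :
    u ∈ reachBelow G v x (#S + 1) := by
  have hsub := w.support_bypass_subset_support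
  refine mem_reachBelow.2 ⟨hu, w.bypass, w.bypass_isPath, ?_,
    fun y hy hyx hyu => hSv y (hS y (hsub hy) hyx hyu)⟩
  have hlen := w.bypass_isPath.length_lt_card (s := insert x (insert u S)) fun y hy => by
    by_cases hyx : y = x
    · simp [hyx]
    by_cases hyu : y = u
    · simp [hyu]
    exact mem_insert_of_mem (mem_insert_of_mem (hS y (hsub hy) hyx hyu))
  have := (card_insert_le x _).trans (Nat.succ_le_succ (card_insert_le u S))
  omega

/-- Cut a path from `x` at its first vertex below `x`. -/
lemma reachBelow_subset_of_lt (hvx : v < x) (j : ℕ) :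
    reachBelow G v x j ⊆ reachBelow G x x j ∪ (Icc 1 (j - 1)).biUnion fun a =>
      ((reachBelow G x x a).filter (v < ·)).biUnion (reachBelow G v · (j - a)) := by
  intro u hu
  obtain ⟨huv, w, hw, hlen, hint⟩ := mem_reachBelow.1 hu
  obtain ⟨q, hqx, hq, hfirst⟩ := w.exists_mem_support_forall_mem_support_imp_eq
    (univ.filter (· < x)) ⟨u, by simp [huv.trans hvx]⟩
  simp only [mem_filter, mem_univ, true_and] at hqx hfirst
  have hsplit := congrArg Walk.length (w.take_spec hq)
  rw [Walk.length_append] at hsplit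
  have htake : q ∈ reachBelow G x x (w.takeUntil q hq).length := by
    refine mem_reachBelow.2 ⟨hqx, _, hw.takeUntil hq, le_rfl, fun y hy hyx hyq => ?_⟩
    exact lt_of_le_of_ne (not_lt.1 fun h => hyq (hfirst y h hy)) hyx.symm
  have htake_pos : (w.takeUntil q hq).length ≠ 0 := fun h =>
    hqx.ne (Walk.eq_of_length_eq_zero h).symm
  by_cases hqu : q = u
  · subst hqu
    exact mem_union_left _ (reachBelow_mono (by omega) htake)
  have hdrop_pos : (w.dropUntil q hq).length ≠ 0 := fun h => hqu (Walk.eq_of_length_eq_zero h)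
  refine mem_union_right _ (mem_biUnion.2 ⟨_, mem_Icc.2 ⟨by omega, by omega⟩,
    mem_biUnion.2 ⟨q, mem_filter.2 ⟨htake, hint q hq hqx.ne hqu⟩, ?_⟩⟩)
  exact reachBelow_mono (by omega) (mem_reachBelow_dropUntil hw huv hint hq hqx.ne)

def reachBound (p j : ℕ) : ℕ := (p * j) ^ (2 * j)

lemma one_le_reachBound (hp : 1 ≤ p) (j : ℕ) : 1 ≤ reachBound p j := by
  rcases j with _ | j
  · simp [reachBound]
  · exact Nat.one_le_pow _ _ (Nat.mul_pos hp j.succ_pos)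

lemma reachBound_mul_le {a j : ℕ} (ha : 1 ≤ a) (haj : a ≤ j) :
    reachBound p (a - 1) * reachBound p (j - a) ≤ reachBound p (j - 1) := by
  calc reachBound p (a - 1) * reachBound p (j - a)
      ≤ (p * (j - 1)) ^ (2 * (a - 1)) * (p * (j - 1)) ^ (2 * (j - a)) := by
        unfold reachBound; gcongr
    _ = reachBound p (j - 1) := by rw [reachBound, ← pow_add]; congr 1; omega

lemma mul_reachBound_lt (hp : 2 ≤ p) {j : ℕ} (hj : 1 ≤ j) :
    j * (p * j * reachBound p (j - 1)) < reachBound p j := by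
  have hpos := one_le_reachBound (by omega : 1 ≤ p) (j - 1)
  calc j * (p * j * reachBound p (j - 1)) < p * j * (p * j * reachBound p (j - 1)) :=
        Nat.mul_lt_mul_of_pos_right (by nlinarith) (by positivity)
    _ = (p * j) ^ 2 * reachBound p (j - 1) := by ring
    _ ≤ (p * j) ^ 2 * (p * j) ^ (2 * (j - 1)) := by unfold reachBound; gcongr; omega
    _ = reachBound p j := by rw [reachBound, ← pow_add]; congr 1; omega

lemma card_reachBelow_self_le_reachBound (hadm : AdmAtMost G p r) (hp : 1 ≤ p) (hkr : k ≤ r)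
    (hk : 1 ≤ k) (h : ∀ z, v < z → #(reachBelow G v z (k - 1)) < reachBound p (k - 1)) :
    #(reachBelow G v v k) ≤ p * k * reachBound p (k - 1) := by
  calc #(reachBelow G v v k) ≤ p + p * (k - 1) * reachBound p (k - 1) :=
        card_reachBelow_self_le hadm hkr fun z hz => (h z hz).le
    _ ≤ p * reachBound p (k - 1) + p * (k - 1) * reachBound p (k - 1) := by
        gcongr; exact Nat.le_mul_of_pos_right p (one_le_reachBound hp _)
    _ = p * k * reachBound p (k - 1) := by
        rw [← add_mul, add_comm p, ← Nat.mul_succ, Nat.succ_eq_add_one, Nat.sub_add_cancel hk]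

theorem card_reachBelow_lt (hp : 2 ≤ p) (hadm : AdmAtMost G p r) :
    ∀ j ≤ r, ∀ {v x : V}, v < x → #(reachBelow G v x j) < reachBound p j := by
  intro j
  induction j using Nat.strong_induction_on with
  | _ j ih =>
  intro hjr v x hvx
  rcases Nat.eq_zero_or_pos j with rfl | hj
  · simp [reachBelow_zero hvx.le, reachBound]
  have hself : ∀ a, 1 ≤ a → a ≤ j → #(reachBelow G x x a) ≤ p * a * reachBound p (a - 1) :=
    fun a ha haj => card_reachBelow_self_le_reachBound hadm (by omega) (by omega) ha
      fun z hz => ih (a - 1) (by omega) (by omega) hz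
  have hterm : ∀ a ∈ Icc 1 (j - 1), #(((reachBelow G x x a).filter (v < ·)).biUnion
      (reachBelow G v · (j - a))) ≤ p * j * reachBound p (j - 1) := by
    intro a ha
    obtain ⟨ha1, haj⟩ := mem_Icc.1 ha
    calc _ ≤ #((reachBelow G x x a).filter (v < ·)) * reachBound p (j - a) :=
          card_biUnion_le_card_mul _ _ _ fun q hq =>
            (ih (j - a) (by omega) (by omega) (mem_filter.1 hq).2).le
      _ ≤ p * a * reachBound p (a - 1) * reachBound p (j - a) := by
          gcongr
          exact (card_filter_le _ _).trans (hself a ha1 (by omega))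
      _ ≤ p * j * (reachBound p (a - 1) * reachBound p (j - a)) := by
          rw [mul_assoc]; gcongr; omega
      _ ≤ p * j * reachBound p (j - 1) := by gcongr; exact reachBound_mul_le ha1 (by omega)
  calc #(reachBelow G v x j)
      ≤ p * j * reachBound p (j - 1) + (j - 1) * (p * j * reachBound p (j - 1)) := by
        refine (card_le_card (reachBelow_subset_of_lt hvx j)).trans
          ((card_union_le _ _).trans (add_le_add (hself j hj le_rfl) ?_))
        refine (card_biUnion_le_card_mul _ _ _ hterm).trans (le_of_eq ?_)
        rw [Nat.card_Icc]; congr 1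
    _ = j * (p * j * reachBound p (j - 1)) := by
        rw [add_comm, ← Nat.succ_mul, Nat.succ_eq_add_one, Nat.sub_add_cancel hj]
    _ < reachBound p j := mul_reachBound_lt hp hj

end Reach

section Rank

variable {α : Type*} [LinearOrder α] {s t D : Finset α} {a b : α}

def rank (s : Finset α) (a : α) : ℕ := #{x ∈ s | x < a}

lemma rank_lt_rank (ha : a ∈ s) (hab : a < b) : rank s a < rank s b := by
  refine card_lt_card ((ssubset_iff_of_subset fun x hx => ?_).2 ⟨a, ?_, ?_⟩)
  · rw [mem_filter] at hx ⊢
    exact ⟨hx.1, hx.2.trans hab⟩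
  · exact mem_filter.2 ⟨ha, hab⟩
  · simp

lemma rank_lt_card (ha : a ∈ s) : rank s a < #s :=
  card_lt_card ((ssubset_iff_of_subset (filter_subset _ s)).2 ⟨a, ha, by simp⟩)

lemma strictMonoOn_rank (s : Finset α) : StrictMonoOn (rank s) s :=
  fun _ ha _ _ hab => rank_lt_rank ha hab

lemma surjOn_rank (s : Finset α) : Set.SurjOn (rank s) s (Set.Iio #s) := by
  intro i hi
  obtain ⟨a, ha, rfl⟩ := surj_on_of_inj_on_of_card_le (t := range #s) (fun a _ => rank s a)
    (fun a ha => mem_range.2 (rank_lt_card ha))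
    (fun _ _ ha hb h => (strictMonoOn_rank s).injOn ha hb h) (by simp) i (by simpa using hi)
  exact ⟨a, ha, rfl⟩

lemma mem_iff_rank_lt_card (hDs : D ⊆ s) (hlow : ∀ d ∈ D, ∀ x ∈ s, x ∉ D → d < x) (ha : a ∈ s) :
    a ∈ D ↔ rank s a < #D := by
  constructor
  · intro haD
    refine lt_of_le_of_lt (card_le_card fun x hx => ?_) (card_erase_lt_of_mem haD)
    obtain ⟨hxs, hxa⟩ := mem_filter.1 hx
    refine mem_erase.2 ⟨hxa.ne, ?_⟩
    by_contra hxD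
    exact (hlow a haD x hxs hxD).not_gt hxa
  · intro hlt
    by_contra haD
    refine hlt.not_ge (card_le_card fun d hd => mem_filter.2 ⟨hDs hd, hlow d hd a ha haD⟩)

lemma exists_bijOn_rank_eq (hst : #s = #t) :
    ∃ f : α → α, Set.BijOn f s t ∧ ∀ a ∈ s, rank t (f a) = rank s a := by
  have hex : ∀ a, ∃ b, a ∈ s → b ∈ t ∧ rank t b = rank s a := by
    intro a
    by_cases ha : a ∈ s
    · obtain ⟨b, hb, hrank⟩ := surjOn_rank t (show rank s a ∈ Set.Iio #t from
        hst ▸ rank_lt_card ha)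
      exact ⟨b, fun _ => ⟨hb, hrank⟩⟩
    · exact ⟨a, fun h => absurd h ha⟩
  choose f hf using hex
  refine ⟨f, ⟨fun a ha => (hf a ha).1, fun a ha b hb hab => ?_, fun b hb => ?_⟩,
    fun a ha => (hf a ha).2⟩
  · refine (strictMonoOn_rank s).injOn ha hb ?_
    rw [← (hf a ha).2, ← (hf b hb).2, hab]
  · obtain ⟨a, ha, hrank⟩ := surjOn_rank s (show rank t b ∈ Set.Iio #s from
      hst ▸ rank_lt_card hb)
    refine ⟨a, ha, (strictMonoOn_rank t).injOn (hf a ha).1 hb ?_⟩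
    rw [(hf a ha).2, hrank]

open Classical in
/-- The ordered isomorphism type of `R` on `s`, with `s` relabelled by `rank s` as
`{0, …, #s - 1}`. -/
noncomputable def pattern (s : Finset α) (R : α → α → Prop) : Finset (ℕ × ℕ) :=
  ((s ×ˢ s).filter fun ab => R ab.1 ab.2).image fun ab => (rank s ab.1, rank s ab.2)

lemma pattern_subset (s : Finset α) (R : α → α → Prop) : pattern s R ⊆ range #s ×ˢ range #s := by
  intro ij hij
  obtain ⟨⟨a, b⟩, hab, rfl⟩ := mem_image.1 hij
  simp only [mem_filter, mem_product] at hab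
  exact mem_product.2 ⟨mem_range.2 (rank_lt_card hab.1.1), mem_range.2 (rank_lt_card hab.1.2)⟩

lemma rank_mem_pattern_iff {R : α → α → Prop} (ha : a ∈ s) (hb : b ∈ s) :
    (rank s a, rank s b) ∈ pattern s R ↔ R a b := by
  constructor
  · intro h
    obtain ⟨⟨a', b'⟩, hab', heq⟩ := mem_image.1 h
    simp only [mem_filter, mem_product, Prod.mk.injEq] at hab' heq
    rw [← (strictMonoOn_rank s).injOn hab'.1.1 ha heq.1,
      ← (strictMonoOn_rank s).injOn hab'.1.2 hb heq.2]
    exact hab'.2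
  · intro h
    classical
    exact mem_image.2 ⟨(a, b), mem_filter.2 ⟨mem_product.2 ⟨ha, hb⟩, h⟩, rfl⟩

lemma exists_bijOn_of_pattern_eq {R R' : α → α → Prop} (hst : #s = #t)
    (h : pattern s R = pattern t R') :
    ∃ f : α → α, Set.BijOn f s t ∧ (∀ a ∈ s, rank t (f a) = rank s a) ∧
      ∀ a ∈ s, ∀ b ∈ s, R a b ↔ R' (f a) (f b) := by
  obtain ⟨f, hf, hrank⟩ := exists_bijOn_rank_eq hst
  refine ⟨f, hf, hrank, fun a ha b hb => ?_⟩
  rw [← rank_mem_pattern_iff (R := R) ha hb, h, ← hrank a ha, ← hrank b hb,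
    rank_mem_pattern_iff (hf.mapsTo ha) (hf.mapsTo hb)]

end Rank

namespace UPair

variable [LinearOrder V] {G : SimpleGraph V} {H : SimpleGraph W} (P : UPair G H) {a u v : V}

lemma D_subset_A : P.D ⊆ P.A := P.isUseful.2.1.2.1

lemma lt_of_mem_D (hu : u ∈ P.D) (ha : a ∈ P.A) (haD : a ∉ P.D) : u < a :=
  P.isUseful.2.1.2.2.2.1 u hu a ⟨ha, haD⟩

variable [Fintype V] {r : ℕ}

noncomputable def finA : Finset V := P.A.toFinite.toFinset

noncomputable def finD : Finset V := P.D.toFinite.toFinset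

@[simp] lemma mem_finA : a ∈ P.finA ↔ a ∈ P.A := Set.Finite.mem_toFinset _

@[simp] lemma mem_finD : a ∈ P.finD ↔ a ∈ P.D := Set.Finite.mem_toFinset _

@[simp] lemma coe_finA : (P.finA : Set V) = P.A := Set.Finite.coe_toFinset _

@[simp] lemma coe_finD : (P.finD : Set V) = P.D := Set.Finite.coe_toFinset _

lemma finD_subset_finA : P.finD ⊆ P.finA := fun x hx => by
  simpa using P.D_subset_A (by simpa using hx)

lemma card_finA_le [Fintype W] (hW : Fintype.card W ≤ r) : #P.finA ≤ r := by
  classical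
  obtain ⟨f, -, hrange, -⟩ := P.isHSub
  have hsub : P.finA ⊆ univ.image f := fun a ha => by
    obtain ⟨w, rfl⟩ : a ∈ Set.range f := hrange ▸ P.isUseful.1 ((P.mem_finA).1 ha)
    exact mem_image_of_mem f (mem_univ w)
  exact (card_le_card hsub).trans (card_image_le.trans (by simpa using hW))

lemma card_finD_lt : #P.finD < #P.finA := by
  obtain ⟨d, hd⟩ := P.isUseful.2.1.1
  obtain ⟨a, ⟨ha, haD⟩, -⟩ := P.isUseful.2.1.2.2.1 d hd
  exact card_lt_card ((ssubset_iff_of_subset P.finD_subset_finA).2 ⟨a, by simpa, by simpa⟩)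

lemma two_le_card_finA : 2 ≤ #P.finA := by
  have : P.finD.Nonempty := by rw [← coe_nonempty, coe_finD]; exact P.isUseful.2.1.1
  have := card_pos.2 this
  have := P.card_finD_lt
  omega

lemma mem_D_iff_rank_lt (ha : a ∈ P.A) : a ∈ P.D ↔ rank P.finA a < #P.finD := by
  simpa using mem_iff_rank_lt_card (s := P.finA) (D := P.finD) P.finD_subset_finA
    (fun d hd x hx hxD => P.lt_of_mem_D (by simpa using hd) (by simpa using hx)
      (by simpa using hxD)) (by simpa using ha)

lemma mem_reachBelow_of_mem_D [Fintype W] (hW : Fintype.card W ≤ r) (hv : v ∈ P.D)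
    (hu : u ∈ P.D) (huv : u < v) : u ∈ reachBelow G v v (r - 1) := by
  obtain ⟨-, ⟨-, -, hnb, -, -⟩, hconn⟩ := P.isUseful
  obtain ⟨a, ha, hva⟩ := hnb v hv
  obtain ⟨b, hb, hub⟩ := hnb u hu
  obtain ⟨w⟩ := hconn.coe.preconnected ⟨a, by simpa using ha⟩ ⟨b, by simpa using hb⟩
  obtain ⟨mid, hmid⟩ : ∃ mid : G.Walk a b, ∀ y ∈ mid.support, y ∈ P.A \ P.D := by
    refine ⟨w.map (Subgraph.hom _), fun y hy => ?_⟩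
    obtain ⟨z, -, rfl⟩ := List.mem_map.1 ((w.support_map _) ▸ hy)
    simpa using z.2
  have hwalk : ∀ y ∈ (Walk.cons (P.J.adj_sub hva) (mid.append
      (.cons (P.J.adj_sub hub.symm) .nil))).support, y ≠ v → y ≠ u → y ∈ P.finA \ P.finD := by
    intro y hy hyv hyu
    rw [Walk.support_cons, List.mem_cons, Walk.mem_support_append_iff] at hy
    rcases hy with rfl | hy | hy
    · exact absurd rfl hyv
    · simpa using hmid y hy
    · simp only [Walk.support_cons, Walk.support_nil, List.mem_cons, List.not_mem_nil,
        or_false] at hy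
      rcases hy with rfl | rfl
      exacts [by simpa using hb, absurd rfl hyu]
  refine reachBelow_mono ?_ (mem_reachBelow_of_walk huv hwalk fun y hy => P.lt_of_mem_D hv
    (by simpa using (mem_sdiff.1 hy).1) (by simpa using (mem_sdiff.1 hy).2))
  have hD2 : #({u, v} : Finset V) ≤ #P.finD := card_le_card (by simp [insert_subset_iff, hu, hv])
  rw [card_pair huv.ne] at hD2
  have := card_sdiff_of_subset P.finD_subset_finA
  have := P.card_finA_le hW
  have := card_le_card P.finD_subset_finA
  omega

/-- Erasing `v` from the prefix makes the first component a small subset of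
`reachBelow G v v (r - 1)`, which is what the count needs. -/
noncomputable def similarityCode (v : V) : Finset V × ℕ × Finset (ℕ × ℕ) :=
  (P.finD.erase v, #P.finA, pattern P.finA P.J.Adj)

lemma similarityCode_mem [Fintype W] (hW : Fintype.card W ≤ r) (hv : v ∈ P.D)
    (hle : ∀ u ∈ P.D, u ≤ v) : P.similarityCode v ∈
      {t ∈ (reachBelow G v v (r - 1)).powerset | #t ≤ r - 2} ×ˢ range (r + 1) ×ˢ
        (range r ×ˢ range r).powerset := by
  have hD := P.card_finD_lt
  have hA := P.card_finA_le hW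
  simp only [similarityCode, mem_product, mem_filter, mem_powerset, mem_range]
  refine ⟨⟨fun u hu => ?_, ?_⟩, by omega, (pattern_subset _ _).trans ?_⟩
  · obtain ⟨huv, huD⟩ := mem_erase.1 hu
    rw [mem_finD] at huD
    exact P.mem_reachBelow_of_mem_D hW hv huD ((hle u huD).lt_of_ne huv)
  · rw [card_erase_of_mem (P.mem_finD.2 hv)]
    omega
  · exact product_subset_product (range_mono hA) (range_mono hA)

lemma similar_of_similarityCode_eq {Q : UPair G H} (hP : v ∈ P.D) (hQ : v ∈ Q.D)
    (h : P.similarityCode v = Q.similarityCode v) : UPairSimilar P Q := by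
  simp only [similarityCode, Prod.mk.injEq] at h
  obtain ⟨hDv, hA, hpat⟩ := h
  have hD : P.finD = Q.finD := by
    rw [← insert_erase ((P.mem_finD).2 hP), ← insert_erase ((Q.mem_finD).2 hQ), hDv]
  obtain ⟨f, hf, hrank, hadj⟩ := exists_bijOn_of_pattern_eq hA hpat
  simp only [coe_finA, mem_finA] at hf hrank hadj
  have hlt : ∀ a ∈ P.A, ∀ b ∈ P.A, a < b ↔ f a < f b := fun a ha b hb => by
    rw [← (strictMonoOn_rank P.finA).lt_iff_lt (by simpa using ha) (by simpa using hb),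
      ← hrank a ha, ← hrank b hb, (strictMonoOn_rank Q.finA).lt_iff_lt
        (by simpa using hf.mapsTo ha) (by simpa using hf.mapsTo hb)]
  have hmemD : ∀ a ∈ P.A, f a ∈ Q.D ↔ a ∈ P.D := fun a ha => by
    rw [Q.mem_D_iff_rank_lt (hf.mapsTo ha), P.mem_D_iff_rank_lt ha, hrank a ha, hD]
  refine ⟨by simpa using congrArg (fun s : Finset V => (s : Set V)) hD, f, hf, ?_, hadj, hlt⟩
  ext b
  constructor
  · rintro ⟨a, ha, rfl⟩
    exact (hmemD a (P.D_subset_A ha)).2 ha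
  · intro hb
    obtain ⟨a, ha, rfl⟩ := hf.surjOn (Q.D_subset_A hb)
    exact ⟨a, (hmemD a ha).1 hb, rfl⟩

end UPair

lemma exponent_le_of_log_bounds {s L : ℕ} (hL : 1 ≤ L) (hlo : 2 ^ L ≤ s + 2)
    (hhi : s + 2 < 2 ^ (L + 1)) :
    (L + 2) * ((2 * s + 1) * s + 2) + (s + 2) * (s + 2) ≤ 3 * (s + 2) ^ 2 * L := by
  rcases le_or_gt 5 L with h5 | h5
  · nlinarith [Nat.mul_le_mul_right (s * s) h5]
  -- below `L = 5` the leading terms alone do not suffice, but then `s < 30`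
  · interval_cases L <;> simp only [pow_succ, pow_zero] at hlo hhi <;> nlinarith

lemma card_powerset_filter_card_le {α : Type*} [DecidableEq α] (T : Finset α) (m : ℕ) :
    #{t ∈ T.powerset | #t ≤ m} ≤ (m + 1) * (#T + 1) ^ m := by
  have hsub : {t ∈ T.powerset | #t ≤ m} ⊆ (range (m + 1)).biUnion (T.powersetCard ·) :=
    fun t ht => by
      rw [mem_filter, mem_powerset] at ht
      exact mem_biUnion.2 ⟨#t, mem_range.2 (Nat.lt_succ_of_le ht.2), mem_powersetCard.2 ⟨ht.1, rfl⟩⟩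
  refine (card_le_card hsub).trans ((card_biUnion_le_card_mul _ _ _ fun i hi => ?_).trans_eq
    (by rw [card_range]))
  rw [card_powersetCard]
  calc (#T).choose i ≤ #T ^ i := Nat.choose_le_pow _ _
    _ ≤ (#T + 1) ^ m := (Nat.pow_le_pow_left (Nat.le_succ _) i).trans
        (Nat.pow_le_pow_right (Nat.succ_pos _) (Nat.lt_succ_iff.1 (mem_range.1 hi)))

lemma count_le_pow_log {p r : ℕ} (hp : 2 ≤ p) (hr : 2 ≤ r) {B : ℕ}
    (hB : B ≤ p * (r - 1) * reachBound p (r - 1 - 1)) :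
    (r - 2 + 1) * (B + 1) ^ (r - 2) * ((r + 1) * 2 ^ (r * r)) ≤
      p ^ (3 * r ^ 2 * Nat.log 2 r) := by
  obtain ⟨s, rfl⟩ : ∃ s, r = s + 2 := ⟨r - 2, by omega⟩
  simp only [Nat.add_sub_cancel, show s + 2 - 1 = s + 1 by omega] at hB ⊢
  set L := Nat.log 2 (s + 2)
  have hlo : 2 ^ L ≤ s + 2 := Nat.pow_log_le_self 2 (by omega)
  have hhi : s + 2 < 2 ^ (L + 1) := Nat.lt_pow_succ_log_self (by norm_num) _
  have hL : 1 ≤ L := Nat.le_log_of_pow_le (by norm_num) (by omega)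
  have hB' : B + 1 ≤ (p * (s + 2)) ^ (2 * s + 1) := by
    calc B + 1 ≤ p * (s + 1) * (p * (s + 1)) ^ (2 * s) + 1 := by
          refine Nat.succ_le_succ (hB.trans ?_)
          unfold reachBound; gcongr; omega
      _ = (p * (s + 1)) ^ (2 * s + 1) + 1 := by ring
      _ ≤ (p * (s + 2)) ^ (2 * s + 1) :=
          Nat.succ_le_of_lt (Nat.pow_lt_pow_left (by nlinarith) (by omega))
  have hX : p * (s + 2) ≤ p ^ (L + 2) := by
    calc p * (s + 2) ≤ p * p ^ (L + 1) :=
          Nat.mul_le_mul_left _ (hhi.le.trans (Nat.pow_le_pow_left hp _))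
      _ = p ^ (L + 2) := by ring
  calc (s + 1) * (B + 1) ^ s * ((s + 2 + 1) * 2 ^ ((s + 2) * (s + 2)))
      = ((s + 1) * (s + 3)) * (B + 1) ^ s * 2 ^ ((s + 2) * (s + 2)) := by ring
    _ ≤ (p * (s + 2)) ^ 2 * ((p * (s + 2)) ^ (2 * s + 1)) ^ s * p ^ ((s + 2) * (s + 2)) := by
        gcongr
        have : (s + 2) ^ 2 ≤ (p * (s + 2)) ^ 2 := by gcongr; nlinarith
        nlinarith
    _ = (p * (s + 2)) ^ ((2 * s + 1) * s + 2) * p ^ ((s + 2) * (s + 2)) := by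
        rw [← pow_mul, ← pow_add, add_comm 2]
    _ ≤ (p ^ (L + 2)) ^ ((2 * s + 1) * s + 2) * p ^ ((s + 2) * (s + 2)) := by gcongr
    _ = p ^ ((L + 2) * ((2 * s + 1) * s + 2) + (s + 2) * (s + 2)) := by rw [← pow_mul, ← pow_add]
    _ ≤ p ^ (3 * (s + 2) ^ 2 * L) :=
        Nat.pow_le_pow_right (by omega) (exponent_le_of_log_bounds hL hlo hhi)

theorem stmt12_general [Fintype V] [LinearOrder V] [Fintype W] (G : SimpleGraph V)
    (H : SimpleGraph W) (p r : ℕ) (hp : 2 ≤ p)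
    (hW : Fintype.card W ≤ r) (hadm : AdmAtMost G p r) (v : V)
    (𝓕 : Set (UPair G H))
    (hmax : ∀ P ∈ 𝓕, v ∈ P.D ∧ ∀ u ∈ P.D, u ≤ v)
    (hnonsim : ∀ P ∈ 𝓕, ∀ Q ∈ 𝓕, P ≠ Q → ¬ UPairSimilar P Q) :
    𝓕.ncard ≤ p ^ (3 * r ^ 2 * Nat.log 2 r) := by
  rcases 𝓕.eq_empty_or_nonempty with rfl | ⟨P₀, -⟩
  · simp
  have hr := P₀.two_le_card_finA.trans (P₀.card_finA_le hW)
  have hT : #(reachBelow G v v (r - 1)) ≤ p * (r - 1) * reachBound p (r - 1 - 1) :=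
    card_reachBelow_self_le_reachBound hadm (by omega) (by omega) (by omega)
      fun z hz => card_reachBelow_lt hp hadm _ (by omega) hz
  have hinj : Set.InjOn (·.similarityCode v) 𝓕 := fun P hP Q hQ h => by
    by_contra hne
    exact hnonsim P hP Q hQ hne (P.similar_of_similarityCode_eq (hmax P hP).1 (hmax Q hQ).1 h)
  calc 𝓕.ncard
      ≤ #({t ∈ (reachBelow G v v (r - 1)).powerset | #t ≤ r - 2} ×ˢ range (r + 1) ×ˢ
          (range r ×ˢ range r).powerset) := by
        rw [← Set.ncard_coe_finset]
        exact Set.ncard_le_ncard_of_injOn _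
          (fun P hP => P.similarityCode_mem hW (hmax P hP).1 (hmax P hP).2) hinj
    _ ≤ (r - 2 + 1) * (#(reachBelow G v v (r - 1)) + 1) ^ (r - 2) *
          ((r + 1) * 2 ^ (r * r)) := by
        simp only [card_product, card_range, card_powerset]
        gcongr
        exact card_powerset_filter_card_le _ _
    _ ≤ p ^ (3 * r ^ 2 * Nat.log 2 r) := count_le_pow_log hp hr hT

/-- For every vertex `v`, any family of pairwise non-similar useful pairs whose prefix has
maximum `v` has size at most `p^{3r²·log r}`. -/
theorem stmt12 [Fintype V] [LinearOrder V] [Fintype W] (G : SimpleGraph V)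
    (H : SimpleGraph W) (hH : H.Connected) (p r : ℕ) (hp : 2 ≤ p)
    (hW : Fintype.card W ≤ r) (hadm : AdmAtMost G p r) (v : V)
    (𝓕 : Set (UPair G H))
    (hmax : ∀ P ∈ 𝓕, v ∈ P.D ∧ ∀ u ∈ P.D, u ≤ v)
    (hnonsim : ∀ P ∈ 𝓕, ∀ Q ∈ 𝓕, P ≠ Q → ¬ UPairSimilar P Q) :
    𝓕.ncard ≤ p ^ (3 * r ^ 2 * Nat.log 2 r) :=
  stmt12_general G H p r hp hW hadm v 𝓕 hmax hnonsim
end
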